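/- Let k₁ ≤ 0 < k₂ and k_h = max(|k₁|, k₂). Fix ρ > 0 and consider differentiable functions δx : [0,∞) → ℝ and δv : [0,∞) → ℝ with |δv(t)| ≤ ρ for all t, such that whenever (δx(t) − k₁|δv(t)|)(δx(t) − k₂|δv(t)|) > 0 (i.e., the pair lies outside the sector), one has δx(t)·δx'(t) ≤ −α·δx(t)² for a constant α > 0. If |δx(0)| > k_h·ρ, then for all t ≥ 0 while |δx(s)| > k_h·ρ on [0,t], we have |δx(t)| ≤ e^{−αt}·|δx(0)|; consequently there exists a finite time T with |δx(T)| ≤ k_h·ρ. -/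

import Mathlib

/-!
Outside the sector the Lyapunov function `exp (2 α s) * δx s ^ 2` is nonincreasing, since its
derivative is `2 exp (2 α s) (α δx² + δx δx')`. While `|δx| > k_h ρ ≥ max (|k₁| |δv|) (k₂ |δv|)`,
both factors `δx - kᵢ |δv|` have the sign of `δx`, so the trajectory stays outside the sector and
`|δx|` decays like `exp (-α t)`; it therefore drops to `k_h ρ` by time `log (|δx 0| / (k_h ρ)) / α`.
-/

open Real Set

theorem mul_sub_pos_of_abs_lt {x a b : ℝ} (ha : |a| < |x|) (hb : |b| < |x|) :
    0 < (x - a) * (x - b) := by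
  obtain ⟨ha₁, ha₂⟩ := abs_lt.mp ha
  obtain ⟨hb₁, hb₂⟩ := abs_lt.mp hb
  rcases le_or_gt 0 x with hx | hx
  · rw [abs_of_nonneg hx] at ha₂ hb₂
    exact mul_pos (by linarith) (by linarith)
  · rw [abs_of_neg hx] at ha₁ hb₁
    exact mul_pos_of_neg_of_neg (by linarith) (by linarith)

section ExpDecay

variable {f : ℝ → ℝ} {α a b : ℝ}

theorem antitoneOn_exp_mul_sq_of_mul_deriv_le (hfc : ContinuousOn f (Icc a b))
    (hfd : DifferentiableOn ℝ f (Ioo a b))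
    (hdec : ∀ s ∈ Ioo a b, f s * deriv f s ≤ -α * f s ^ 2) :
    AntitoneOn (fun s => exp (2 * α * s) * f s ^ 2) (Icc a b) := by
  have hexp : ∀ s, HasDerivAt (fun s => exp (2 * α * s)) (exp (2 * α * s) * (2 * α)) s :=
    fun s => by simpa using ((hasDerivAt_id s).const_mul (2 * α)).exp
  have hderiv : ∀ s ∈ Ioo a b, HasDerivAt (fun s => exp (2 * α * s) * f s ^ 2)
      (exp (2 * α * s) * (2 * α) * f s ^ 2 + exp (2 * α * s) * (2 * f s ^ 1 * deriv f s)) s :=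
    fun s hs =>
      (hexp s).mul (((hfd s hs).differentiableAt (Ioo_mem_nhds hs.1 hs.2)).hasDerivAt.pow 2)
  apply antitoneOn_of_deriv_nonpos (convex_Icc a b)
  · exact (continuous_exp.comp (continuous_const_mul _)).continuousOn.mul (hfc.pow 2)
  · rw [interior_Icc]
    exact fun s hs => (hderiv s hs).differentiableAt.differentiableWithinAt
  · rw [interior_Icc]
    intro s hs
    rw [(hderiv s hs).deriv]
    nlinarith [hdec s hs, exp_pos (2 * α * s)]

theorem abs_le_exp_mul_abs_of_mul_deriv_le (hab : a ≤ b) (hfc : ContinuousOn f (Icc a b))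
    (hfd : DifferentiableOn ℝ f (Ioo a b))
    (hdec : ∀ s ∈ Ioo a b, f s * deriv f s ≤ -α * f s ^ 2) :
    |f b| ≤ exp (-α * (b - a)) * |f a| := by
  have hmono : exp (2 * α * b) * f b ^ 2 ≤ exp (2 * α * a) * f a ^ 2 :=
    antitoneOn_exp_mul_sq_of_mul_deriv_le hfc hfd hdec ⟨le_rfl, hab⟩ ⟨hab, le_rfl⟩ hab
  refine abs_le_of_sq_le_sq ?_ (by positivity)
  calc f b ^ 2 = exp (-(2 * α * b)) * (exp (2 * α * b) * f b ^ 2) := by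
        rw [← mul_assoc, ← exp_add, neg_add_cancel, exp_zero, one_mul]
    _ ≤ exp (-(2 * α * b)) * (exp (2 * α * a) * f a ^ 2) := by gcongr
    _ = (exp (-α * (b - a)) * |f a|) ^ 2 := by
        rw [mul_pow, sq_abs, ← exp_nat_mul, ← mul_assoc, ← exp_add]
        ring_nf

end ExpDecay

theorem exists_abs_le_of_exp_decay {f : ℝ → ℝ} {α c : ℝ} (hα : 0 < α) (hc : 0 < c)
    (h0 : c < |f 0|)
    (hdecay : ∀ t, 0 ≤ t → (∀ s ∈ Icc 0 t, c < |f s|) → |f t| ≤ exp (-α * t) * |f 0|) :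
    ∃ T, 0 ≤ T ∧ |f T| ≤ c := by
  set T := log (|f 0| / c) / α
  have hT : 0 ≤ T := div_nonneg (log_nonneg ((one_le_div hc).mpr h0.le)) hα.le
  have hexpT : exp (-α * T) * |f 0| = c := by
    have hf0 : 0 < |f 0| := hc.trans h0
    rw [show -α * T = -log (|f 0| / c) by rw [neg_mul, mul_div_cancel₀ _ hα.ne'], exp_neg,
      exp_log (by positivity)]
    field_simp
  by_contra! hbig
  exact (hexpT ▸ hdecay T hT fun s hs => hbig s hs.1).not_gt (hbig T hT)

theorem fhigs_enter_box_general (k₁ k₂ α ρ : ℝ) (δx δv : ℝ → ℝ)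
    (hk₂ : 0 < k₂) (hα : 0 < α) (hρ : 0 < ρ)
    (hdx : Differentiable ℝ δx)
    (hvbd : ∀ t, 0 ≤ t → |δv t| ≤ ρ)
    (hdecay : ∀ t, 0 ≤ t →
      0 < (δx t - k₁ * |δv t|) * (δx t - k₂ * |δv t|) →
      δx t * deriv δx t ≤ -α * (δx t) ^ 2)
    (h0 : max |k₁| k₂ * ρ < |δx 0|) :
    (∀ t, 0 ≤ t → (∀ s ∈ Set.Icc 0 t, max |k₁| k₂ * ρ < |δx s|) →
      |δx t| ≤ Real.exp (-α * t) * |δx 0|) ∧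
    (∃ T, 0 ≤ T ∧ |δx T| ≤ max |k₁| k₂ * ρ) := by
  set kh := max |k₁| k₂
  have hscaled : ∀ k, |k| ≤ kh → ∀ s, 0 ≤ s → |(k * |δv s|)| ≤ kh * ρ := fun k hk s hs => by
    rw [abs_mul, abs_abs]
    exact mul_le_mul hk (hvbd s hs) (abs_nonneg _) (by positivity)
  have houtside : ∀ t, (∀ s ∈ Icc 0 t, kh * ρ < |δx s|) →
      ∀ s ∈ Ioo 0 t, 0 < (δx s - k₁ * |δv s|) * (δx s - k₂ * |δv s|) := fun t hbox s hs =>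
    mul_sub_pos_of_abs_lt
      ((hscaled k₁ (le_max_left _ _) s hs.1.le).trans_lt (hbox s (Ioo_subset_Icc_self hs)))
      ((hscaled k₂ ((abs_of_pos hk₂).trans_le (le_max_right _ _)) s hs.1.le).trans_lt
        (hbox s (Ioo_subset_Icc_self hs)))
  have hdecay_exp : ∀ t, 0 ≤ t → (∀ s ∈ Icc 0 t, kh * ρ < |δx s|) →
      |δx t| ≤ exp (-α * t) * |δx 0| := fun t ht hbox => by
    simpa using abs_le_exp_mul_abs_of_mul_deriv_le ht hdx.continuous.continuousOn
      hdx.differentiableOn fun s hs => hdecay s hs.1.le (houtside t hbox s hs)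
  exact ⟨hdecay_exp, exists_abs_le_of_exp_decay hα (by positivity) h0 hdecay_exp⟩

/-- Outside the sector, the state difference of FHIGS decays exponentially, forcing
entry into the box {|δx| ≤ k_h ρ} in finite time. -/
theorem fhigs_enter_box (k₁ k₂ α ρ : ℝ) (δx δv : ℝ → ℝ)
    (hk₁ : k₁ ≤ 0) (hk₂ : 0 < k₂) (hα : 0 < α) (hρ : 0 < ρ)
    (hdx : Differentiable ℝ δx) (hdv : Differentiable ℝ δv)
    (hvbd : ∀ t, 0 ≤ t → |δv t| ≤ ρ)
    (hdecay : ∀ t, 0 ≤ t →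
      0 < (δx t - k₁ * |δv t|) * (δx t - k₂ * |δv t|) →
      δx t * deriv δx t ≤ -α * (δx t) ^ 2)
    (h0 : max |k₁| k₂ * ρ < |δx 0|) :
    (∀ t, 0 ≤ t → (∀ s ∈ Set.Icc 0 t, max |k₁| k₂ * ρ < |δx s|) →
      |δx t| ≤ Real.exp (-α * t) * |δx 0|) ∧
    (∃ T, 0 ≤ T ∧ |δx T| ≤ max |k₁| k₂ * ρ) :=
  fhigs_enter_box_general k₁ k₂ α ρ δx δv hk₂ hα hρ hdx hvbd hdecay h0
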